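/- For every n > 0 and all admissible allocation functions π₁, π₂, one has R_I(π₁,π₂) ≥ R_I(π₁⁰,π₂⁰), where π₁⁰(x) ≡ σ₁/(σ₁+σ₂) and π₂⁰(x) ≡ σ₂/(σ₁+σ₂); that is, the ideal regret R_I is minimized by the constant allocation proportional to the standard deviations. -/

import Mathlib

open Matrix MeasureTheory

/-- Standard normal cumulative distribution function `Φ`. -/
noncomputable def stdNormalCDF (x : ℝ) : ℝ :=
  ∫ t in Set.Iic x, Real.exp (-t ^ 2 / 2) / Real.sqrt (2 * Real.pi)

/-- The feature vector `(1, xᵀ)ᵀ ∈ ℝ^{p+1}` of a covariate vector `x ∈ ℝ^p`. -/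
def feat {p : ℕ} (x : Fin p → ℝ) : Fin (p + 1) → ℝ := Fin.cons 1 x

/-- Moment matrix `∫_{[0,1]^p} (1,xᵀ)ᵀ(1,xᵀ) w(x) dx` of a weight function `w`. -/
noncomputable def momentMatrix (p : ℕ) (w : (Fin p → ℝ) → ℝ) :
    Matrix (Fin (p + 1)) (Fin (p + 1)) ℝ :=
  Matrix.of fun i j => ∫ x in Set.Icc (0 : Fin p → ℝ) 1, feat x i * feat x j * w x

/-- The variance function `V_π(x) = (1,xᵀ)(Σ₁+Σ₂)(1,xᵀ)ᵀ` induced by the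
allocation functions `π₁, π₂` and residual standard deviations `σ₁, σ₂`. -/
noncomputable def varFun (p : ℕ) (f : (Fin p → ℝ) → ℝ) (σ1 σ2 : ℝ)
    (π1 π2 : (Fin p → ℝ) → ℝ) (x : Fin p → ℝ) : ℝ :=
  let ν1 := ∫ y in Set.Icc (0 : Fin p → ℝ) 1, π1 y * f y
  let ν2 := ∫ y in Set.Icc (0 : Fin p → ℝ) 1, π2 y * f y
  let Q1 := (1 / ν1) • momentMatrix p fun y => π1 y * f y
  let Q2 := (1 / ν2) • momentMatrix p fun y => π2 y * f y
  feat x ⬝ᵥ (((σ1 ^ 2 / ν1) • Q1⁻¹ + (σ2 ^ 2 / ν2) • Q2⁻¹) *ᵥ feat x)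

/-- The ideal regret
`R_I(π₁,π₂) = ∫_{[0,1]^p} Φ(−√n |g₁−g₂|/√V_π) |g₂−g₁| f`. -/
noncomputable def idealRegret (p : ℕ) (f : (Fin p → ℝ) → ℝ) (σ1 σ2 α1 α2 : ℝ)
    (β1 β2 : Fin p → ℝ) (n : ℝ) (π1 π2 : (Fin p → ℝ) → ℝ) : ℝ :=
  let g1 : (Fin p → ℝ) → ℝ := fun x => α1 + ∑ i, β1 i * x i
  let g2 : (Fin p → ℝ) → ℝ := fun x => α2 + ∑ i, β2 i * x i
  ∫ x in Set.Icc (0 : Fin p → ℝ) 1,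
    stdNormalCDF (-(Real.sqrt n * |g1 x - g2 x|) /
        Real.sqrt (varFun p f σ1 σ2 π1 π2 x)) * |g2 x - g1 x| * f x

/-!
Write `M_k = ∫ (1,xᵀ)ᵀ(1,xᵀ) π_k f` for the unnormalised moment matrices, so that
`Σ_k = σ_k² M_k⁻¹`, `M₁ + M₂ = M` is the moment matrix of `f`, and the proportional allocation has
`V⁰(x) = (σ₁ + σ₂)² (1,xᵀ) M⁻¹ (1,xᵀ)ᵀ`. Because `v ⬝ A⁻¹ v = sup_w (2 v ⬝ w - w ⬝ A w)`, the map
`(v, A) ↦ v ⬝ A⁻¹ v` is jointly convex, which gives `(σ₁ + σ₂)² M⁻¹ ≤ σ₁² M₁⁻¹ + σ₂² M₂⁻¹`,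
i.e. `V⁰ ≤ V_π` pointwise. Since `Φ` is increasing, the integrand of `R_I` is then pointwise
smaller for the proportional allocation.
-/

namespace Matrix

variable {m : Type*} [Fintype m] [DecidableEq m]

lemma inv_smul_of_ne_zero {K : Type*} [Field K] (A : Matrix m m K) {c : K} (hc : c ≠ 0) :
    (c • A)⁻¹ = c⁻¹ • A⁻¹ := by
  by_cases hA : IsUnit A.det
  · exact inv_smul' A (Units.mk0 c hc) hA
  · have hcA : ¬IsUnit (c • A).det := by
      rwa [det_smul, IsUnit.mul_iff, not_and_or, or_iff_right (by simpa using pow_ne_zero _ hc)]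
    rw [nonsing_inv_apply_not_isUnit _ hA, nonsing_inv_apply_not_isUnit _ hcA, smul_zero]

lemma PosDef.two_mul_dotProduct_sub_le_inv {A : Matrix m m ℝ} (hA : A.PosDef) (v w : m → ℝ) :
    2 * (v ⬝ᵥ w) - w ⬝ᵥ A *ᵥ w ≤ v ⬝ᵥ A⁻¹ *ᵥ v := by
  set u := A⁻¹ *ᵥ v
  have hAu : A *ᵥ u = v := by
    rw [mulVec_mulVec, mul_nonsing_inv _ hA.det_pos.ne'.isUnit, one_mulVec]
  have hsymm : ∀ a b : m → ℝ, a ⬝ᵥ A *ᵥ b = (A *ᵥ a) ⬝ᵥ b := fun a b => by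
    rw [dotProduct_mulVec, ← vecMul_transpose, ← conjTranspose_eq_transpose_of_trivial,
      hA.isHermitian.eq]
  have hsq := hA.posSemidef.dotProduct_mulVec_nonneg (u - w)
  rw [star_trivial, mulVec_sub, dotProduct_sub, sub_dotProduct, sub_dotProduct, hsymm u w,
    hAu] at hsq
  rw [dotProduct_comm v u]
  linarith [dotProduct_comm v w]

lemma PosDef.sq_add_mul_inv_add_le {A₁ A₂ : Matrix m m ℝ} (h₁ : A₁.PosDef) (h₂ : A₂.PosDef)
    (s₁ s₂ : ℝ) (v : m → ℝ) :
    (s₁ + s₂) ^ 2 * (v ⬝ᵥ (A₁ + A₂)⁻¹ *ᵥ v) ≤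
      s₁ ^ 2 * (v ⬝ᵥ A₁⁻¹ *ᵥ v) + s₂ ^ 2 * (v ⬝ᵥ A₂⁻¹ *ᵥ v) := by
  set u := (A₁ + A₂)⁻¹ *ᵥ v
  have hAu : (A₁ + A₂) *ᵥ u = v := by
    rw [mulVec_mulVec, mul_nonsing_inv _ (h₁.add h₂).det_pos.ne'.isUnit, one_mulVec]
  -- test both variational bounds against the same `w = (s₁ + s₂) • u`
  have e₁ := h₁.two_mul_dotProduct_sub_le_inv (s₁ • v) ((s₁ + s₂) • u)
  have e₂ := h₂.two_mul_dotProduct_sub_le_inv (s₂ • v) ((s₁ + s₂) • u)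
  have hsplit : u ⬝ᵥ A₁ *ᵥ u + u ⬝ᵥ A₂ *ᵥ u = v ⬝ᵥ u := by
    rw [← dotProduct_add, ← add_mulVec, hAu, dotProduct_comm]
  simp only [mulVec_smul, dotProduct_smul, smul_dotProduct, smul_eq_mul] at e₁ e₂
  change (s₁ + s₂) ^ 2 * (v ⬝ᵥ u) ≤ _
  nlinarith

end Matrix

open Set

noncomputable def stdNormalPDF (t : ℝ) : ℝ := Real.exp (-t ^ 2 / 2) / Real.sqrt (2 * Real.pi)

lemma stdNormalPDF_nonneg (t : ℝ) : 0 ≤ stdNormalPDF t := by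
  unfold stdNormalPDF; positivity

lemma integrable_stdNormalPDF : Integrable stdNormalPDF := by
  have h := (integrable_exp_neg_mul_sq (b := 1 / 2) (by norm_num)).div_const
    (Real.sqrt (2 * Real.pi))
  refine h.congr (ae_of_all _ fun t => ?_)
  simp only [stdNormalPDF]
  ring_nf

lemma stdNormalCDF_nonneg (x : ℝ) : 0 ≤ stdNormalCDF x :=
  setIntegral_nonneg measurableSet_Iic fun t _ => stdNormalPDF_nonneg t

lemma stdNormalCDF_le_integral (x : ℝ) : stdNormalCDF x ≤ ∫ t, stdNormalPDF t :=
  setIntegral_le_integral integrable_stdNormalPDF (ae_of_all _ stdNormalPDF_nonneg)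

lemma monotone_stdNormalCDF : Monotone stdNormalCDF := fun _ _ hab =>
  setIntegral_mono_set integrable_stdNormalPDF.integrableOn (ae_of_all _ stdNormalPDF_nonneg)
    (Iic_subset_Iic.2 hab).eventuallyLE

section Regression

variable {p : ℕ}

@[simp]
lemma feat_zero (x : Fin p → ℝ) : feat x 0 = 1 := rfl

lemma feat_ne_zero (x : Fin p → ℝ) : feat x ≠ 0 :=
  fun h => one_ne_zero (congrFun h 0)

lemma continuous_feat : Continuous (feat : (Fin p → ℝ) → Fin (p + 1) → ℝ) :=
  continuous_pi fun i => Fin.cases continuous_const continuous_apply i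

lemma abs_feat_le_one {x : Fin p → ℝ} (hx : x ∈ Icc 0 1) (i : Fin (p + 1)) :
    |feat x i| ≤ 1 := by
  refine Fin.cases (by simp) (fun j => ?_) i
  rw [feat, Fin.cons_succ, abs_le]
  exact ⟨by linarith [show (0 : ℝ) ≤ x j from hx.1 j], hx.2 j⟩

lemma momentMatrix_add {w₁ w₂ : (Fin p → ℝ) → ℝ} (h₁ : IntegrableOn w₁ (Icc 0 1))
    (h₂ : IntegrableOn w₂ (Icc 0 1)) :
    momentMatrix p (fun x => w₁ x + w₂ x) = momentMatrix p w₁ + momentMatrix p w₂ := by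
  have hfeat : ∀ {w : (Fin p → ℝ) → ℝ}, IntegrableOn w (Icc 0 1) → ∀ i j : Fin (p + 1),
      IntegrableOn (fun x => feat x i * feat x j * w x) (Icc 0 1) := fun hw i j =>
    hw.bdd_mul (c := 1)
      (((continuous_apply i).comp continuous_feat).mul
        ((continuous_apply j).comp continuous_feat)).aestronglyMeasurable
      ((ae_restrict_iff' measurableSet_Icc).2 (ae_of_all _ fun x hx => by
        simpa [abs_mul] using
          mul_le_one₀ (abs_feat_le_one hx i) (abs_nonneg _) (abs_feat_le_one hx j)))
  ext i j
  simp only [momentMatrix, Matrix.add_apply, of_apply, mul_add]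
  exact integral_add (hfeat h₁ i j) (hfeat h₂ i j)

lemma momentMatrix_const_mul (c : ℝ) (w : (Fin p → ℝ) → ℝ) :
    momentMatrix p (fun x => c * w x) = c • momentMatrix p w := by
  ext i j
  simp only [momentMatrix, Matrix.smul_apply, of_apply, smul_eq_mul]
  rw [← integral_const_mul]
  congr 1 with x
  ring

variable {f π₁ π₂ : (Fin p → ℝ) → ℝ} {σ₁ σ₂ : ℝ}

lemma continuous_varFun : Continuous (varFun p f σ₁ σ₂ π₁ π₂) :=
  continuous_feat.dotProduct (continuous_const.matrix_mulVec continuous_feat)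

lemma varFun_eq (hν₁ : ∫ y in Icc 0 1, π₁ y * f y ≠ 0) (hν₂ : ∫ y in Icc 0 1, π₂ y * f y ≠ 0)
    (x : Fin p → ℝ) :
    varFun p f σ₁ σ₂ π₁ π₂ x =
      σ₁ ^ 2 * (feat x ⬝ᵥ (momentMatrix p fun y => π₁ y * f y)⁻¹ *ᵥ feat x) +
        σ₂ ^ 2 * (feat x ⬝ᵥ (momentMatrix p fun y => π₂ y * f y)⁻¹ *ᵥ feat x) := by
  simp only [varFun]
  rw [inv_smul_of_ne_zero _ (one_div_ne_zero hν₁), inv_smul_of_ne_zero _ (one_div_ne_zero hν₂),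
    smul_smul, smul_smul, add_mulVec, smul_mulVec, smul_mulVec, dotProduct_add, dotProduct_smul,
    dotProduct_smul, smul_eq_mul, smul_eq_mul]
  field_simp

lemma varFun_proportional (hσ₁ : σ₁ ≠ 0) (hσ₂ : σ₂ ≠ 0) (hσ : σ₁ + σ₂ ≠ 0)
    (hf : ∫ y in Icc 0 1, f y = 1) (x : Fin p → ℝ) :
    varFun p f σ₁ σ₂ (fun _ => σ₁ / (σ₁ + σ₂)) (fun _ => σ₂ / (σ₁ + σ₂)) x =
      (σ₁ + σ₂) ^ 2 * (feat x ⬝ᵥ (momentMatrix p f)⁻¹ *ᵥ feat x) := by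
  have hν (c : ℝ) : ∫ y in Icc 0 1, c * f y = c := by rw [integral_const_mul, hf, mul_one]
  rw [varFun_eq (by rw [hν]; positivity) (by rw [hν]; positivity),
    momentMatrix_const_mul, momentMatrix_const_mul, inv_smul_of_ne_zero _ (by positivity),
    inv_smul_of_ne_zero _ (by positivity), smul_mulVec, smul_mulVec, dotProduct_smul,
    dotProduct_smul, smul_eq_mul, smul_eq_mul]
  field_simp

lemma idealRegret_le_of_varFun_le {π₁' π₂' : (Fin p → ℝ) → ℝ} {α₁ α₂ n : ℝ}
    {β₁ β₂ : Fin p → ℝ} (hf : IntegrableOn f (Icc 0 1)) (hf_nonneg : ∀ x, 0 ≤ f x)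
    (hpos : ∀ x, 0 < varFun p f σ₁ σ₂ π₁ π₂ x)
    (hle : ∀ x, varFun p f σ₁ σ₂ π₁ π₂ x ≤ varFun p f σ₁ σ₂ π₁' π₂' x) :
    idealRegret p f σ₁ σ₂ α₁ α₂ β₁ β₂ n π₁ π₂ ≤ idealRegret p f σ₁ σ₂ α₁ α₂ β₁ β₂ n π₁' π₂' := by
  set g₁ : (Fin p → ℝ) → ℝ := fun x => α₁ + ∑ i, β₁ i * x i
  set g₂ : (Fin p → ℝ) → ℝ := fun x => α₂ + ∑ i, β₂ i * x i
  have hg₁ : Continuous g₁ := by fun_prop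
  have hg₂ : Continuous g₂ := by fun_prop
  set F : ((Fin p → ℝ) → ℝ) → (Fin p → ℝ) → ℝ := fun V x =>
    stdNormalCDF (-(Real.sqrt n * |g₁ x - g₂ x|) / Real.sqrt (V x)) * |g₂ x - g₁ x|
  change ∫ x in Icc 0 1, F (varFun p f σ₁ σ₂ π₁ π₂) x * f x ≤
    ∫ x in Icc 0 1, F (varFun p f σ₁ σ₂ π₁' π₂') x * f x
  have hF_nonneg : ∀ V x, 0 ≤ F V x := fun V x =>
    mul_nonneg (stdNormalCDF_nonneg _) (abs_nonneg _)
  have hF_mono : ∀ x, F (varFun p f σ₁ σ₂ π₁ π₂) x ≤ F (varFun p f σ₁ σ₂ π₁' π₂') x := by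
    intro x
    refine mul_le_mul_of_nonneg_right (monotone_stdNormalCDF ?_) (abs_nonneg _)
    rw [neg_div, neg_div, neg_le_neg_iff]
    exact div_le_div_of_nonneg_left (by positivity) (Real.sqrt_pos.2 (hpos x))
      (Real.sqrt_le_sqrt (hle x))
  obtain ⟨B, hB⟩ := isCompact_Icc.exists_bound_of_continuousOn (hg₂.sub hg₁).abs.continuousOn
  have hF_int : IntegrableOn (fun x => F (varFun p f σ₁ σ₂ π₁' π₂') x * f x) (Icc 0 1) := by
    refine hf.bdd_mul (c := (∫ t, stdNormalPDF t) * B) ?_ ?_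
    · have hV : Continuous (varFun p f σ₁ σ₂ π₁' π₂') := continuous_varFun
      exact (monotone_stdNormalCDF.measurable.comp (by fun_prop)).mul
        (by fun_prop : Continuous fun x => |g₂ x - g₁ x|).measurable |>.aestronglyMeasurable
    · refine (ae_restrict_iff' measurableSet_Icc).2 (ae_of_all _ fun x hx => ?_)
      rw [Real.norm_eq_abs, abs_of_nonneg (hF_nonneg _ x)]
      exact mul_le_mul (stdNormalCDF_le_integral _) (by simpa using hB x hx) (abs_nonneg _)
        (integral_nonneg stdNormalPDF_nonneg)
  exact integral_mono_of_nonneg (ae_of_all _ fun x => mul_nonneg (hF_nonneg _ x) (hf_nonneg x))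
    hF_int (ae_of_all _ fun x => mul_le_mul_of_nonneg_right (hF_mono x) (hf_nonneg x))

end Regression

theorem idealRegret_minimized_by_proportional_allocation_general
    (p : ℕ)
    (f π1 π2 : (Fin p → ℝ) → ℝ) (σ1 σ2 α1 α2 : ℝ) (β1 β2 : Fin p → ℝ)
    (n : ℝ)
    (hσ1 : 0 < σ1) (hσ2 : 0 < σ2)
    (hf_nonneg : ∀ x, 0 ≤ f x)
    (hf_density : ∫ x in Set.Icc (0 : Fin p → ℝ) 1, f x = 1)
    (hπ1_meas : Measurable π1) (hπ2_meas : Measurable π2)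
    (hπ1_range : ∀ x, π1 x ∈ Set.Icc (0 : ℝ) 1)
    (hπ2_range : ∀ x, π2 x ∈ Set.Icc (0 : ℝ) 1)
    (hπ_sum : ∀ x, π1 x + π2 x = 1)
    (hν1_pos : 0 < ∫ x in Set.Icc (0 : Fin p → ℝ) 1, π1 x * f x)
    (hν2_pos : 0 < ∫ x in Set.Icc (0 : Fin p → ℝ) 1, π2 x * f x)
    (hQ1_pos : ((1 / ∫ x in Set.Icc (0 : Fin p → ℝ) 1, π1 x * f x) •
        momentMatrix p fun x => π1 x * f x).PosDef)
    (hQ2_pos : ((1 / ∫ x in Set.Icc (0 : Fin p → ℝ) 1, π2 x * f x) •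
        momentMatrix p fun x => π2 x * f x).PosDef) :
    idealRegret p f σ1 σ2 α1 α2 β1 β2 n
        (fun _ => σ1 / (σ1 + σ2)) (fun _ => σ2 / (σ1 + σ2)) ≤
      idealRegret p f σ1 σ2 α1 α2 β1 β2 n π1 π2 := by
  have hf_int : IntegrableOn f (Icc 0 1) := .of_integral_ne_zero (by simp [hf_density])
  have hπf_int : ∀ {π : (Fin p → ℝ) → ℝ}, Measurable π → (∀ x, π x ∈ Icc (0 : ℝ) 1) →
      IntegrableOn (fun x => π x * f x) (Icc 0 1) := fun hπ hπ_range =>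
    hf_int.bdd_mul (c := 1) hπ.aestronglyMeasurable
      (ae_of_all _ fun x => abs_le.2 ⟨by linarith [(hπ_range x).1], (hπ_range x).2⟩)
  have hM_pos : ∀ {ν : ℝ} {M : Matrix (Fin (p + 1)) (Fin (p + 1)) ℝ}, 0 < ν →
      ((1 / ν) • M).PosDef → M.PosDef := fun hν hQ => by
    simpa [smul_smul, hν.ne'] using hQ.smul hν
  have hM_split : momentMatrix p f =
      (momentMatrix p fun x => π1 x * f x) + momentMatrix p fun x => π2 x * f x := by
    rw [← momentMatrix_add (hπf_int hπ1_meas hπ1_range) (hπf_int hπ2_meas hπ2_range)]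
    simp_rw [← add_mul, hπ_sum, one_mul]
  have hM1 := hM_pos hν1_pos hQ1_pos
  have hM2 := hM_pos hν2_pos hQ2_pos
  refine idealRegret_le_of_varFun_le hf_int hf_nonneg (fun x => ?_) (fun x => ?_)
  · rw [varFun_proportional hσ1.ne' hσ2.ne' (by positivity) hf_density]
    have hM := hM_split ▸ hM1.add hM2
    simpa using mul_pos (by positivity) (hM.inv.dotProduct_mulVec_pos (feat_ne_zero x))
  · rw [varFun_proportional hσ1.ne' hσ2.ne' (by positivity) hf_density,
      varFun_eq hν1_pos.ne' hν2_pos.ne', hM_split]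
    exact hM1.sq_add_mul_inv_add_le hM2 σ1 σ2 (feat x)

/-- The ideal regret is minimized over admissible allocations by the constant
allocation proportional to the standard deviations:
`π₁⁰ ≡ σ₁/(σ₁+σ₂)`, `π₂⁰ ≡ σ₂/(σ₁+σ₂)`. -/
theorem idealRegret_minimized_by_proportional_allocation
    (p : ℕ) (hp : 1 ≤ p)
    (f π1 π2 : (Fin p → ℝ) → ℝ) (σ1 σ2 α1 α2 : ℝ) (β1 β2 : Fin p → ℝ)
    (n : ℝ) (hn : 0 < n)
    (hσ1 : 0 < σ1) (hσ2 : 0 < σ2)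
    (hf_meas : Measurable f) (hf_nonneg : ∀ x, 0 ≤ f x)
    (hf_bdd : ∃ C, ∀ x, f x ≤ C)
    (hf_density : ∫ x in Set.Icc (0 : Fin p → ℝ) 1, f x = 1)
    (hπ1_meas : Measurable π1) (hπ2_meas : Measurable π2)
    (hπ1_range : ∀ x, π1 x ∈ Set.Icc (0 : ℝ) 1)
    (hπ2_range : ∀ x, π2 x ∈ Set.Icc (0 : ℝ) 1)
    (hπ_sum : ∀ x, π1 x + π2 x = 1)
    (hν1_pos : 0 < ∫ x in Set.Icc (0 : Fin p → ℝ) 1, π1 x * f x)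
    (hν2_pos : 0 < ∫ x in Set.Icc (0 : Fin p → ℝ) 1, π2 x * f x)
    (hQ1_pos : ((1 / ∫ x in Set.Icc (0 : Fin p → ℝ) 1, π1 x * f x) •
        momentMatrix p fun x => π1 x * f x).PosDef)
    (hQ2_pos : ((1 / ∫ x in Set.Icc (0 : Fin p → ℝ) 1, π2 x * f x) •
        momentMatrix p fun x => π2 x * f x).PosDef)
    (hQ_pos : (momentMatrix p f).PosDef) :
    idealRegret p f σ1 σ2 α1 α2 β1 β2 n
        (fun _ => σ1 / (σ1 + σ2)) (fun _ => σ2 / (σ1 + σ2)) ≤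
      idealRegret p f σ1 σ2 α1 α2 β1 β2 n π1 π2 :=
  idealRegret_minimized_by_proportional_allocation_general p f π1 π2 σ1 σ2 α1 α2 β1 β2 n hσ1 hσ2
    hf_nonneg hf_density hπ1_meas hπ2_meas hπ1_range hπ2_range hπ_sum hν1_pos hν2_pos hQ1_pos
    hQ2_pos
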